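/- arXiv:2602.06728 — 3 statements merged into one kernel-verified Lean document; each statement's English description precedes it below -/
import Mathlib

section
/- Every countable metric space without isolated points is homeomorphic to the rational numbers with the metric inherited from ℝ. -/
/-!
A countable metric space has a basis of clopen balls (all but countably many radii give an empty
sphere), and if it has no isolated points, every nonempty clopen set splits into `ℤ`-many nonempty
clopen pieces of small diameter. Iterating the splitting embeds `M` into `ℕ → ℤ` with an image that
branches fully at every node. Sending an address to the common point of correspondingly nested
intervals of `ℝ`, where the `j`-th subinterval lies between the `(j - 1)`-th and the `(j + 1)`-th,
embeds `ℕ → ℤ` into `ℝ` and turns full branching into: every point of the image `S` is a limit of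
`S` from both sides. Hence the topology of `S` is its order topology, and Cantor's back-and-forth
isomorphism `S ≃o ℚ` is a homeomorphism.
-/

open Function Set Metric Topology PiNat

theorem nonempty_homeomorph_rat_of_forall_inter_Ioo_nonempty {α : Type*} [LinearOrder α]
    [TopologicalSpace α] [OrderTopology α] [NoMinOrder α] [NoMaxOrder α] (S : Set α)
    (hS : S.Countable) (hne : S.Nonempty)
    (hleft : ∀ x ∈ S, ∀ a < x, (S ∩ Ioo a x).Nonempty)
    (hright : ∀ x ∈ S, ∀ b, x < b → (S ∩ Ioo x b).Nonempty) :
    Nonempty (S ≃ₜ ℚ) := by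
  have : Countable S := hS.to_subtype
  have : Nonempty S := hne.to_subtype
  have : OrderTopology S := induced_orderTopology' _ Iff.rfl
    (fun {x a} h => let ⟨y, hy, hya⟩ := hleft x x.2 a h; ⟨⟨y, hy⟩, hya.2, hya.1.le⟩)
    (fun {x b} h => let ⟨y, hy, hyb⟩ := hright x x.2 b h; ⟨⟨y, hy⟩, hyb.1, hyb.2.le⟩)
  have : DenselyOrdered S := ⟨fun x y hxy =>
    let ⟨z, hz, hzxy⟩ := hleft y y.2 x hxy; ⟨⟨z, hz⟩, hzxy.1, hzxy.2⟩⟩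
  have : NoMinOrder S := ⟨fun x =>
    let ⟨a, ha⟩ := exists_lt (x : α); let ⟨z, hz, hzx⟩ := hleft x x.2 a ha; ⟨⟨z, hz⟩, hzx.2⟩⟩
  have : NoMaxOrder S := ⟨fun x =>
    let ⟨b, hb⟩ := exists_gt (x : α); let ⟨z, hz, hzx⟩ := hright x x.2 b hb; ⟨⟨z, hz⟩, hzx.1⟩⟩
  obtain ⟨e⟩ := Order.iso_of_countable_dense S ℚ
  exact ⟨e.toHomeomorph⟩

lemma PiNat.hasBasis_nhds_cylinder {E : ℕ → Type*} [∀ n, TopologicalSpace (E n)]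
    [∀ n, DiscreteTopology (E n)] (x : ∀ n, E n) : (𝓝 x).HasBasis (fun _ => True) (cylinder x) := by
  refine ⟨fun s => ⟨fun hs => ?_, fun ⟨n, _, hn⟩ =>
    Filter.mem_of_superset ((isOpen_cylinder E x n).mem_nhds (self_mem_cylinder x n)) hn⟩⟩
  obtain ⟨_, ⟨y, n, rfl⟩, hx, hs⟩ := (isTopologicalBasis_cylinders E).mem_nhds_iff.1 hs
  exact ⟨n, trivial, mem_cylinder_iff_eq.1 hx ▸ hs⟩

def IsFullyBranching (T : Set (ℕ → ℤ)) : Prop :=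
  ∀ β ∈ T, ∀ (n : ℕ) (j : ℤ), ∃ γ ∈ T, γ ∈ cylinder β n ∧ γ n = j

noncomputable def dyadicSigmoid (j : ℤ) : ℝ := 2 ^ j / (2 ^ j + 1)

lemma dyadicSigmoid_pos (j : ℤ) : 0 < dyadicSigmoid j := by
  unfold dyadicSigmoid; positivity

lemma dyadicSigmoid_lt_one (j : ℤ) : dyadicSigmoid j < 1 := by
  have : (0 : ℝ) < 2 ^ j := by positivity
  rw [dyadicSigmoid, div_lt_one (by linarith)]; linarith

lemma strictMono_dyadicSigmoid : StrictMono dyadicSigmoid := by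
  intro i j hij
  have hi : (0 : ℝ) < 2 ^ i := by positivity
  have hij' : (2 : ℝ) ^ i < 2 ^ j := zpow_lt_zpow_right₀ one_lt_two hij
  rw [dyadicSigmoid, dyadicSigmoid, div_lt_div_iff₀ (by linarith) (by linarith)]
  nlinarith

lemma dyadicSigmoid_succ_sub_le (j : ℤ) : dyadicSigmoid (j + 1) - dyadicSigmoid j ≤ 1 / 2 := by
  have ht : (0 : ℝ) < 2 ^ j := by positivity
  rw [dyadicSigmoid, dyadicSigmoid, zpow_add_one₀ two_ne_zero,
    div_sub_div _ _ (by linarith) (by linarith), div_le_div_iff₀ (by nlinarith) two_pos]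
  nlinarith

noncomputable def childInterval (j : ℤ) (I : ℝ × ℝ) : ℝ × ℝ :=
  (I.1 + (I.2 - I.1) * dyadicSigmoid j, I.1 + (I.2 - I.1) * dyadicSigmoid (j + 1))

section childInterval

variable {I : ℝ × ℝ} (hI : I.1 < I.2) (j : ℤ)
include hI

lemma fst_lt_childInterval_fst : I.1 < (childInterval j I).1 := by
  have := dyadicSigmoid_pos j
  simp only [childInterval]; nlinarith

lemma childInterval_snd_lt_snd : (childInterval j I).2 < I.2 := by
  have := dyadicSigmoid_lt_one (j + 1)
  simp only [childInterval]; nlinarith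

lemma childInterval_fst_lt_snd : (childInterval j I).1 < (childInterval j I).2 := by
  have := strictMono_dyadicSigmoid (lt_add_one j)
  simp only [childInterval]; nlinarith

lemma childInterval_length_le :
    (childInterval j I).2 - (childInterval j I).1 ≤ (I.2 - I.1) / 2 := by
  have := dyadicSigmoid_succ_sub_le j
  simp only [childInterval]; nlinarith

lemma childInterval_snd_le_fst {j k : ℤ} (hjk : j < k) :
    (childInterval j I).2 ≤ (childInterval k I).1 := by
  have := strictMono_dyadicSigmoid.monotone (Int.add_one_le_of_lt hjk)
  simp only [childInterval]; nlinarith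

end childInterval

noncomputable def nestedInterval (β : ℕ → ℤ) : ℕ → ℝ × ℝ
  | 0 => (0, 1)
  | n + 1 => childInterval (β n) (nestedInterval β n)

lemma nestedInterval_succ (β : ℕ → ℤ) (n : ℕ) :
    nestedInterval β (n + 1) = childInterval (β n) (nestedInterval β n) := rfl

lemma nestedInterval_fst_lt_snd (β : ℕ → ℤ) (n : ℕ) :
    (nestedInterval β n).1 < (nestedInterval β n).2 := by
  induction n with
  | zero => exact zero_lt_one
  | succ n ih => exact childInterval_fst_lt_snd ih _

lemma nestedInterval_length_le (β : ℕ → ℤ) (n : ℕ) :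
    (nestedInterval β n).2 - (nestedInterval β n).1 ≤ (1 / 2) ^ n := by
  induction n with
  | zero => simp [nestedInterval]
  | succ n ih =>
    calc _ ≤ ((nestedInterval β n).2 - (nestedInterval β n).1) / 2 :=
          childInterval_length_le (nestedInterval_fst_lt_snd β n) _
      _ ≤ (1 / 2) ^ (n + 1) := by rw [pow_succ]; linarith

lemma strictMono_nestedInterval_fst (β : ℕ → ℤ) : StrictMono fun n => (nestedInterval β n).1 :=
  strictMono_nat_of_lt_succ fun n => fst_lt_childInterval_fst (nestedInterval_fst_lt_snd β n) _

lemma strictAnti_nestedInterval_snd (β : ℕ → ℤ) : StrictAnti fun n => (nestedInterval β n).2 :=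
  strictAnti_nat_of_succ_lt fun n => childInterval_snd_lt_snd (nestedInterval_fst_lt_snd β n) _

lemma nestedInterval_eq_of_mem_cylinder {β γ : ℕ → ℤ} {n : ℕ} (h : γ ∈ cylinder β n) :
    nestedInterval γ n = nestedInterval β n := by
  induction n with
  | zero => rfl
  | succ n ih =>
    rw [nestedInterval_succ, nestedInterval_succ, ih (cylinder_anti β n.le_succ h),
      mem_cylinder_iff.1 h n n.lt_succ_self]

lemma nestedInterval_succ_snd_le_fst {β γ : ℕ → ℤ} {n : ℕ} (h : γ ∈ cylinder β n)
    (hlt : β n < γ n) : (nestedInterval β (n + 1)).2 ≤ (nestedInterval γ (n + 1)).1 := by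
  rw [nestedInterval_succ, nestedInterval_succ, nestedInterval_eq_of_mem_cylinder h]
  exact childInterval_snd_le_fst (nestedInterval_fst_lt_snd β n) hlt

noncomputable def nestedLimit (β : ℕ → ℤ) : ℝ := ⨆ n, (nestedInterval β n).1

lemma nestedLimit_mem_Ioo (β : ℕ → ℤ) (n : ℕ) :
    nestedLimit β ∈ Ioo (nestedInterval β n).1 (nestedInterval β n).2 := by
  have hbdd : ∀ m, (nestedInterval β m).1 ≤ (nestedInterval β (n + 1)).2 := fun m =>
    (le_total m (n + 1)).elim
      (fun h => ((strictMono_nestedInterval_fst β).monotone h).trans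
        (nestedInterval_fst_lt_snd β _).le)
      (fun h => (nestedInterval_fst_lt_snd β m).le.trans
        ((strictAnti_nestedInterval_snd β).antitone h))
  constructor
  · exact (strictMono_nestedInterval_fst β n.lt_succ_self).trans_le
      (le_ciSup ⟨_, forall_mem_range.2 hbdd⟩ (n + 1))
  · exact (ciSup_le hbdd).trans_lt (strictAnti_nestedInterval_snd β n.lt_succ_self)

lemma nestedLimit_lt_of_mem_cylinder {β γ : ℕ → ℤ} {n : ℕ} (h : γ ∈ cylinder β n)
    (hlt : β n < γ n) : nestedLimit β < nestedLimit γ :=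
  calc nestedLimit β < (nestedInterval β (n + 1)).2 := (nestedLimit_mem_Ioo β _).2
    _ ≤ (nestedInterval γ (n + 1)).1 := nestedInterval_succ_snd_le_fst h hlt
    _ < nestedLimit γ := (nestedLimit_mem_Ioo γ _).1

lemma mem_cylinder_of_nestedLimit_mem_Ioo {β γ : ℕ → ℤ} {n : ℕ}
    (h : nestedLimit γ ∈ Ioo (nestedInterval β n).1 (nestedInterval β n).2) :
    γ ∈ cylinder β n := by
  by_contra hγ
  have hne : γ ≠ β := by rintro rfl; exact hγ (self_mem_cylinder γ n)
  have hi : firstDiff γ β < n := not_le.1 fun hn => hγ ((mem_cylinder_iff_le_firstDiff hne n).2 hn)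
  have hγβ : γ ∈ cylinder β (firstDiff γ β) := mem_cylinder_firstDiff γ β
  rcases (apply_firstDiff_ne hne).lt_or_gt with hlt | hgt
  · refine h.1.not_ge ((nestedLimit_mem_Ioo γ (firstDiff γ β + 1)).2.le.trans ?_)
    calc (nestedInterval γ (firstDiff γ β + 1)).2
        ≤ (nestedInterval β (firstDiff γ β + 1)).1 :=
          nestedInterval_succ_snd_le_fst ((mem_cylinder_comm _ _ _).1 hγβ) hlt
      _ ≤ (nestedInterval β n).1 := (strictMono_nestedInterval_fst β).monotone hi
  · refine h.2.not_ge (le_trans ?_ (nestedLimit_mem_Ioo γ (firstDiff γ β + 1)).1.le)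
    calc (nestedInterval β n).2
        ≤ (nestedInterval β (firstDiff γ β + 1)).2 := (strictAnti_nestedInterval_snd β).antitone hi
      _ ≤ (nestedInterval γ (firstDiff γ β + 1)).1 := nestedInterval_succ_snd_le_fst hγβ hgt

lemma dist_nestedLimit_lt {β γ : ℕ → ℤ} {n : ℕ} (h : γ ∈ cylinder β n) :
    dist (nestedLimit γ) (nestedLimit β) < (1 / 2) ^ n := by
  have hγ := nestedLimit_mem_Ioo γ n
  have hβ := nestedLimit_mem_Ioo β n
  have hlen := nestedInterval_length_le β n
  rw [nestedInterval_eq_of_mem_cylinder h] at hγ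
  rw [Real.dist_eq, abs_sub_lt_iff]
  constructor <;> linarith [hγ.1, hγ.2, hβ.1, hβ.2]

lemma continuous_nestedLimit : Continuous nestedLimit := by
  refine continuous_iff_continuousAt.2 fun β =>
    ((hasBasis_nhds_cylinder β).tendsto_iff nhds_basis_ball).2 fun ε hε => ?_
  obtain ⟨n, hn⟩ := exists_pow_lt_of_lt_one hε one_half_lt_one
  exact ⟨n, trivial, fun γ hγ => (dist_nestedLimit_lt hγ).trans hn⟩

theorem isEmbedding_nestedLimit : IsEmbedding nestedLimit := by
  have hind : IsInducing nestedLimit := by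
    refine isInducing_iff_nhds.2 fun β => le_antisymm (continuous_nestedLimit.tendsto β).le_comap
      ((hasBasis_nhds_cylinder β).ge_iff.2 fun n _ => Filter.mem_comap.2 ?_)
    exact ⟨_, isOpen_Ioo.mem_nhds (nestedLimit_mem_Ioo β n),
      fun γ hγ => mem_cylinder_of_nestedLimit_mem_Ioo hγ⟩
  exact ⟨hind, hind.injective⟩

lemma IsFullyBranching.image_nestedLimit_inter_Ioo_nonempty_left {T : Set (ℕ → ℤ)}
    (hT : IsFullyBranching T) {x : ℝ} (hx : x ∈ nestedLimit '' T) {a : ℝ} (ha : a < x) :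
    (nestedLimit '' T ∩ Ioo a x).Nonempty := by
  obtain ⟨β, hβ, rfl⟩ := hx
  obtain ⟨n, hn⟩ := exists_pow_lt_of_lt_one (sub_pos.2 ha) one_half_lt_one
  obtain ⟨γ, hγ, hγβ, hγn⟩ := hT β hβ n (β n - 1)
  have hdist := dist_nestedLimit_lt hγβ
  rw [Real.dist_eq, abs_lt] at hdist
  exact ⟨_, mem_image_of_mem _ hγ, by linarith,
    nestedLimit_lt_of_mem_cylinder ((mem_cylinder_comm _ _ _).1 hγβ) (by omega)⟩

lemma IsFullyBranching.image_nestedLimit_inter_Ioo_nonempty_right {T : Set (ℕ → ℤ)}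
    (hT : IsFullyBranching T) {x : ℝ} (hx : x ∈ nestedLimit '' T) {b : ℝ} (hb : x < b) :
    (nestedLimit '' T ∩ Ioo x b).Nonempty := by
  obtain ⟨β, hβ, rfl⟩ := hx
  obtain ⟨n, hn⟩ := exists_pow_lt_of_lt_one (sub_pos.2 hb) one_half_lt_one
  obtain ⟨γ, hγ, hγβ, hγn⟩ := hT β hβ n (β n + 1)
  have hdist := dist_nestedLimit_lt hγβ
  rw [Real.dist_eq, abs_lt] at hdist
  exact ⟨_, mem_image_of_mem _ hγ, nestedLimit_lt_of_mem_cylinder hγβ (by omega), by linarith⟩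

section Countable

variable {M : Type*} [MetricSpace M] [Countable M]

/-- Only countably many radii are distances from `x`; for any other radius the sphere is empty. -/
lemma exists_isClopen_ball (x : M) {ε : ℝ} (hε : 0 < ε) :
    ∃ r, 0 < r ∧ r < ε ∧ IsClopen (ball x r) := by
  obtain ⟨r, hr, hrε⟩ := ((countable_range (dist x)).dense_compl ℝ).exists_mem_open isOpen_Ioo
    (nonempty_Ioo.2 hε)
  have hball : ball x r = closedBall x r := by
    ext y
    rw [mem_ball, mem_closedBall, le_iff_lt_or_eq, or_iff_left]
    exact fun hy => hr ⟨y, by rw [dist_comm, hy]⟩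
  exact ⟨r, hrε.1, hrε.2, hball ▸ isClosed_closedBall, isOpen_ball⟩

lemma exists_isClopen_mem_subset {U : Set M} (hU : IsOpen U) {x : M} (hx : x ∈ U) :
    ∃ V, IsClopen V ∧ x ∈ V ∧ V ⊆ U := by
  obtain ⟨ε, hε, hεU⟩ := Metric.isOpen_iff.1 hU x hx
  obtain ⟨r, hr, hrε, hclopen⟩ := exists_isClopen_ball x hε
  exact ⟨ball x r, hclopen, mem_ball_self hr, (ball_subset_ball hrε.le).trans hεU⟩

variable [PerfectSpace M]

lemma exists_small_isClopen_ssubset {R : Set M} (hR : IsClopen R) {p : M} (hp : p ∈ R)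
    {ε : ℝ} (hε : 0 < ε) :
    ∃ V, IsClopen V ∧ p ∈ V ∧ V ⊆ R ∧ (R \ V).Nonempty ∧ ∀ y ∈ V, ∀ z ∈ V, dist y z < ε := by
  obtain ⟨q, hqR, hqp⟩ :=
    ((infinite_of_mem_nhds p (hR.isOpen.mem_nhds hp)).sdiff (finite_singleton p)).nonempty
  obtain ⟨V, hV, hpV, hVsub⟩ := exists_isClopen_mem_subset
    ((hR.isOpen.inter isOpen_ball).inter isOpen_compl_singleton)
    (⟨⟨hp, mem_ball_self (half_pos hε)⟩, Ne.symm hqp⟩ : p ∈ R ∩ ball p (ε / 2) ∩ {q}ᶜ)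
  refine ⟨V, hV, hpV, fun y hy => (hVsub hy).1.1, ⟨q, hqR, fun hqV => (hVsub hqV).2 rfl⟩,
    fun y hy z hz => ?_⟩
  calc dist y z ≤ dist y p + dist p z := dist_triangle y p z
    _ < ε / 2 + ε / 2 := add_lt_add (hVsub hy).1.2 (mem_ball'.1 (hVsub hz).1.2)
    _ = ε := add_halves ε

/-- Greedy construction: the `k`-th piece is cut from what is left so as to contain the `k`-th
point of an enumeration, if that point is still left. -/
lemma exists_isClopen_partition_nat {U : Set M} (hU : IsClopen U) (hne : U.Nonempty)
    {ε : ℝ} (hε : 0 < ε) :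
    ∃ V : ℕ → Set M, (∀ k, IsClopen (V k) ∧ (V k).Nonempty) ∧ Pairwise (Disjoint on V) ∧
      ⋃ k, V k = U ∧ ∀ k, ∀ y ∈ V k, ∀ z ∈ V k, dist y z < ε := by
  have : Nonempty M := hne.to_subtype.map Subtype.val
  obtain ⟨u, hu⟩ := exists_surjective_nat M
  have hstep : ∀ (R : Set M) (k : ℕ), ∃ V : Set M, IsClopen R → R.Nonempty →
      IsClopen V ∧ V ⊆ R ∧ V.Nonempty ∧ (u k ∈ R → u k ∈ V) ∧ (R \ V).Nonempty ∧
        ∀ y ∈ V, ∀ z ∈ V, dist y z < ε := by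
    intro R k
    by_cases hR : IsClopen R ∧ R.Nonempty
    · obtain ⟨p, hpR, hp⟩ : ∃ p ∈ R, u k ∈ R → p = u k := by
        by_cases hk : u k ∈ R
        exacts [⟨u k, hk, fun _ => rfl⟩, ⟨_, hR.2.some_mem, fun h => (hk h).elim⟩]
      obtain ⟨V, hV, hpV, hVR, hrest, hsmall⟩ := exists_small_isClopen_ssubset hR.1 hpR hε
      exact ⟨V, fun _ _ => ⟨hV, hVR, ⟨p, hpV⟩, fun hk => hp hk ▸ hpV, hrest, hsmall⟩⟩
    · exact ⟨∅, fun h h' => (hR ⟨h, h'⟩).elim⟩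
  choose S hS using hstep
  let R : ℕ → Set M := fun n => Nat.rec U (fun k Rk => Rk \ S Rk k) n
  have hRsucc : ∀ n, R (n + 1) = R n \ S (R n) n := fun n => rfl
  have hR : ∀ n, IsClopen (R n) ∧ (R n).Nonempty := by
    intro n
    induction n with
    | zero => exact ⟨hU, hne⟩
    | succ n ih =>
      obtain ⟨hclopen, -, -, -, hrest, -⟩ := hS (R n) n ih.1 ih.2
      exact ⟨hRsucc n ▸ ih.1.diff hclopen, hRsucc n ▸ hrest⟩
  have hRanti : Antitone R := antitone_nat_of_succ_le fun n => sdiff_subset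
  have hV (n : ℕ) := hS (R n) n (hR n).1 (hR n).2
  have hVR (n : ℕ) : S (R n) n ⊆ R n := (hV n).2.1
  refine ⟨fun n => S (R n) n, fun n => ⟨(hV n).1, (hV n).2.2.1⟩, ?_, ?_, fun n => (hV n).2.2.2.2.2⟩
  · refine pairwise_disjoint_on _ |>.2 fun m n hmn => ?_
    have hsub : S (R n) n ⊆ R m \ S (R m) m := hRsucc m ▸ (hVR n).trans (hRanti hmn)
    exact disjoint_sdiff_right.mono_right hsub
  · refine (iUnion_subset fun n => (hVR n).trans (hRanti n.zero_le)).antisymm fun x hx => ?_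
    by_contra hxV
    simp only [mem_iUnion, not_exists] at hxV
    have hxR : ∀ n, x ∈ R n := fun n => by
      induction n with
      | zero => exact hx
      | succ n ih => exact hRsucc n ▸ ⟨ih, hxV n⟩
    obtain ⟨k, rfl⟩ := hu x
    exact hxV k ((hV k).2.2.2.1 (hxR k))

end Countable

/-- The partition of `U` into the fibres of the labelling `ι`. -/
structure IsClopenPartition {M : Type*} [MetricSpace M] (U : Set M) (ι : M → ℤ) (ε : ℝ) :
    Prop where
  isClopen_fiber : ∀ j, IsClopen (U ∩ ι ⁻¹' {j})
  surjOn : SurjOn ι U univ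
  dist_lt : ∀ y ∈ U, ∀ z ∈ U, ι y = ι z → dist y z < ε

lemma exists_isClopenPartition {M : Type*} [MetricSpace M] [Countable M] [PerfectSpace M]
    {U : Set M} (hU : IsClopen U) (hne : U.Nonempty) {ε : ℝ} (hε : 0 < ε) :
    ∃ ι : M → ℤ, IsClopenPartition U ι ε := by
  obtain ⟨V, hV, hdisj, hunion, hsmall⟩ := exists_isClopen_partition_nat hU hne hε
  have hlabel : ∀ y ∈ U, ∃ k, y ∈ V k := fun y hy => mem_iUnion.1 (hunion ▸ hy)
  let e := Equiv.intEquivNat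
  let ι : M → ℤ := fun y => e.symm (Classical.epsilon fun k => y ∈ V k)
  have hfiber : ∀ j, U ∩ ι ⁻¹' {j} = V (e j) := by
    intro j
    ext y
    constructor
    · rintro ⟨hy, rfl⟩
      simpa [ι] using Classical.epsilon_spec (hlabel y hy)
    · intro hy
      refine ⟨hunion ▸ mem_iUnion_of_mem _ hy, ?_⟩
      have hk : Classical.epsilon (fun k => y ∈ V k) = e j := hdisj.eq <|
        not_disjoint_iff.2 ⟨y, Classical.epsilon_spec (p := fun k => y ∈ V k) ⟨_, hy⟩, hy⟩
      simp [ι, hk]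
  refine ⟨ι, fun j => hfiber j ▸ (hV (e j)).1, fun j _ => ?_, fun y hy z hz hyz => ?_⟩
  · obtain ⟨y, hy⟩ := (hV (e j)).2
    rw [← hfiber j] at hy
    exact ⟨y, hy⟩
  · have hy' : y ∈ V (e (ι y)) := hfiber (ι y) ▸ ⟨hy, rfl⟩
    have hz' : z ∈ V (e (ι y)) := hfiber (ι y) ▸ ⟨hz, hyz.symm⟩
    exact hsmall _ y hy' z hz'

section Address

variable {M : Type*} (P : Set M → ℕ → M → ℤ)

/-- The level-`n` piece containing `x` when each piece `U` of level `n` is cut up by the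
labelling `P U n`. -/
def clopenCell (x : M) : ℕ → Set M
  | 0 => univ
  | n + 1 => clopenCell x n ∩ P (clopenCell x n) n ⁻¹' {P (clopenCell x n) n x}

def clopenAddress (x : M) (n : ℕ) : ℤ := P (clopenCell P x n) n x

lemma clopenCell_succ (x : M) (n : ℕ) :
    clopenCell P x (n + 1) = clopenCell P x n ∩ P (clopenCell P x n) n ⁻¹' {clopenAddress P x n} :=
  rfl

lemma mem_clopenCell_self (x : M) (n : ℕ) : x ∈ clopenCell P x n := by
  induction n with
  | zero => trivial
  | succ n ih => exact ⟨ih, rfl⟩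

lemma clopenCell_eq_of_mem {x y : M} {n : ℕ} (hy : y ∈ clopenCell P x n) :
    clopenCell P y n = clopenCell P x n := by
  induction n with
  | zero => rfl
  | succ n ih =>
    rw [clopenCell_succ, clopenCell_succ, ih hy.1, clopenAddress, ih hy.1]
    rw [clopenCell_succ] at hy
    rw [hy.2]

lemma clopenCell_eq_preimage_cylinder (x : M) (n : ℕ) :
    clopenCell P x n = clopenAddress P ⁻¹' cylinder (clopenAddress P x) n := by
  induction n with
  | zero => simp [clopenCell, cylinder_zero]
  | succ n ih =>
    ext y
    have hlabel (hy : y ∈ clopenCell P x n) : P (clopenCell P x n) n y = clopenAddress P y n := by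
      rw [clopenAddress, clopenCell_eq_of_mem P hy]
    rw [mem_preimage, mem_cylinder_iff, Nat.forall_lt_succ_right, ← mem_cylinder_iff,
      ← mem_preimage, ← ih, clopenCell_succ]
    exact ⟨fun hy => ⟨hy.1, hlabel hy.1 ▸ hy.2⟩, fun hy => ⟨hy.1, (hlabel hy.1).trans hy.2⟩⟩

variable [MetricSpace M] {P}
variable (hP : ∀ U n, IsClopen U → U.Nonempty → IsClopenPartition U (P U n) ((1 / 2) ^ n))
include hP

lemma isClopen_clopenCell (x : M) (n : ℕ) : IsClopen (clopenCell P x n) := by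
  induction n with
  | zero => exact isClopen_univ
  | succ n ih => exact (hP _ n ih ⟨x, mem_clopenCell_self P x n⟩).isClopen_fiber _

lemma dist_lt_of_mem_clopenCell_succ {x y : M} {n : ℕ} (hy : y ∈ clopenCell P x (n + 1)) :
    dist y x < (1 / 2) ^ n :=
  (hP _ n (isClopen_clopenCell hP x n) ⟨x, mem_clopenCell_self P x n⟩).dist_lt y hy.1 x
    (mem_clopenCell_self P x n) hy.2

lemma exists_clopenAddress_eq (x : M) (n : ℕ) (j : ℤ) :
    ∃ y ∈ clopenCell P x n, clopenAddress P y n = j := by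
  obtain ⟨y, hy, hyj⟩ := (hP _ n (isClopen_clopenCell hP x n)
    ⟨x, mem_clopenCell_self P x n⟩).surjOn (mem_univ j)
  exact ⟨y, hy, by rw [clopenAddress, clopenCell_eq_of_mem P hy, hyj]⟩

lemma isEmbedding_clopenAddress : IsEmbedding (clopenAddress P) := by
  have hind : IsInducing (clopenAddress P) := by
    refine isInducing_iff_nhds.2 fun x => le_antisymm ?_ ?_
    · refine ((hasBasis_nhds_cylinder _).comap _).ge_iff.2 fun n _ => ?_
      rw [← clopenCell_eq_preimage_cylinder]
      exact (isClopen_clopenCell hP x n).isOpen.mem_nhds (mem_clopenCell_self P x n)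
    · refine nhds_basis_ball.ge_iff.2 fun ε hε => ?_
      obtain ⟨n, hn⟩ := exists_pow_lt_of_lt_one hε one_half_lt_one
      refine Filter.mem_of_superset (((hasBasis_nhds_cylinder _).comap _).mem_of_mem
        (i := n + 1) trivial) ?_
      rw [← clopenCell_eq_preimage_cylinder]
      exact fun y hy => (dist_lt_of_mem_clopenCell_succ hP hy).trans hn
  exact ⟨hind, hind.injective⟩

end Address

theorem exists_isEmbedding_isFullyBranching (M : Type*) [MetricSpace M] [Countable M]
    [PerfectSpace M] : ∃ α : M → ℕ → ℤ, IsEmbedding α ∧ IsFullyBranching (range α) := by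
  have hP (U : Set M) (n : ℕ) : ∃ ι : M → ℤ,
      IsClopen U → U.Nonempty → IsClopenPartition U ι ((1 / 2) ^ n) := by
    by_cases hU : IsClopen U ∧ U.Nonempty
    · obtain ⟨ι, hι⟩ := exists_isClopenPartition hU.1 hU.2 (pow_pos one_half_pos n)
      exact ⟨ι, fun _ _ => hι⟩
    · exact ⟨0, fun h h' => (hU ⟨h, h'⟩).elim⟩
  choose P hP using hP
  refine ⟨clopenAddress P, isEmbedding_clopenAddress hP, ?_⟩
  rintro _ ⟨x, rfl⟩ n j
  obtain ⟨y, hy, hyj⟩ := exists_clopenAddress_eq hP x n j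
  rw [clopenCell_eq_preimage_cylinder] at hy
  exact ⟨_, mem_range_self y, hy, hyj⟩

/-- Sierpiński: every nonempty countable metric space without isolated points is
homeomorphic to ℚ (with the metric inherited from ℝ). -/
theorem countable_metric_no_isolated_homeo_rat
    (M : Type*) [MetricSpace M] [Countable M] [Nonempty M]
    (h : ∀ x : M, ¬ IsOpen ({x} : Set M)) :
    Nonempty (M ≃ₜ ℚ) := by
  have : PerfectSpace M := perfectSpace_iff_forall_not_isolated.2 fun x =>
    ⟨fun hx => h x ((isOpen_singleton_iff_punctured_nhds x).2 hx)⟩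
  obtain ⟨α, hα, hbranch⟩ := exists_isEmbedding_isFullyBranching M
  obtain ⟨e⟩ := nonempty_homeomorph_rat_of_forall_inter_Ioo_nonempty (nestedLimit '' range α)
    ((countable_range α).image _) ((range_nonempty α).image _)
    (fun _ hx _ ha => hbranch.image_nestedLimit_inter_Ioo_nonempty_left hx ha)
    (fun _ hx _ hb => hbranch.image_nestedLimit_inter_Ioo_nonempty_right hx hb)
  exact ⟨(isEmbedding_nestedLimit.comp hα).toHomeomorph.trans
    ((Homeomorph.setCongr (range_comp _ _)).trans e)⟩
end

section
/- If X and Y are countable, compact subsets of a complete metric space, then X is homeomorphic to a subset of Y or Y is homeomorphic to a subset of X. -/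
/-!
In a complete metric space a countable closed set has empty perfect kernel, so the
Cantor–Bendixson derivatives of a nonempty countable compact set `K` reach a last nonempty
level `Kᵈ[β]`, which is finite, say with `n + 1` points. Then `K` embeds into every countable
compact `L` for which `Lᵈ[β]` has at least `n + 1` points, by induction on `β` and then on `n`.
Splitting off one top point with a clopen ball reduces to `n = 0`. When `Kᵈ[β] = {p}`, the set
`K \ {p}` is cut into clopen annuli around `p`, all of rank `< β`, which are sent by induction
into disjoint clopen annuli shrinking to a point `q ∈ Lᵈ[β]`. Clopen balls and annuli exist
because a countable set meets only countably many spheres about a point. Comparing `(β, n)`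
lexicographically gives the theorem.
-/

open Set Filter Topology Metric Function CantorBendixson

universe u

section DerivedSet

variable {X : Type u} [TopologicalSpace X]

theorem iteratedDerivedSet_subset (s : Set X) (a : Ordinal.{u}) : sᵈ[a] ⊆ s := by
  simpa using iteratedDerivedSet_antitone s (zero_le : 0 ≤ a)

theorem relDerivedSet_inter_of_isOpen {A U : Set X} (hU : IsOpen U) :
    relDerivedSet (A ∩ U) = relDerivedSet A ∩ U := by
  ext x
  simp only [relDerivedSet_apply, mem_inter_iff, mem_derivedSet]
  constructor
  · rintro ⟨hacc, hA, hxU⟩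
    exact ⟨⟨hacc.mono (principal_mono.2 inter_subset_left), hA⟩, hxU⟩
  · rintro ⟨⟨hacc, hA⟩, hxU⟩
    refine ⟨?_, hA, hxU⟩
    simpa only [inter_comm] using hacc.nhds_inter (hU.mem_nhds hxU)

theorem iteratedDerivedSet_inter_of_isOpen (s : Set X) {U : Set X} (hU : IsOpen U)
    (a : Ordinal.{u}) : (s ∩ U)ᵈ[a] = sᵈ[a] ∩ U := by
  induction a using Ordinal.limitRecOn with
  | zero => simp
  | add_one a ih => simp only [iteratedDerivedSet_succ, ih, relDerivedSet_inter_of_isOpen hU]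
  | limit a ha ih =>
    have : Nonempty (Iio a) := ⟨⟨0, ha.bot_lt⟩⟩
    simp only [iteratedDerivedSet_limit ha, iInter_inter]
    exact iInter_congr fun b => ih b b.2

theorem infinite_iteratedDerivedSet_of_lt [T1Space X] {s : Set X} {a b : Ordinal.{u}} (hab : a < b)
    (hb : sᵈ[b].Nonempty) : sᵈ[a].Infinite := by
  obtain ⟨x, hx⟩ := hb
  have hx' : x ∈ sᵈ[a + 1] := iteratedDerivedSet_antitone s (Order.add_one_le_of_lt hab) hx
  rw [iteratedDerivedSet_succ] at hx'
  exact Set.Infinite.of_accPt hx'.1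

theorem IsCompact.finite_of_relDerivedSet_eq_empty {s : Set X} (hs : IsCompact s)
    (h : relDerivedSet s = ∅) : s.Finite := by
  by_contra hinf
  obtain ⟨x, hx, hacc⟩ := Set.Infinite.exists_accPt_of_subset_isCompact hinf hs subset_rfl
  exact eq_empty_iff_forall_notMem.1 h x ⟨hacc, hx⟩

end DerivedSet

section Perfect

variable {M : Type u} [MetricSpace M] [CompleteSpace M]

theorem Perfect.not_countable {C : Set M} (hC : Perfect C) (hne : C.Nonempty) :
    ¬C.Countable := by
  intro hc
  obtain ⟨f, hfC, -, hf⟩ := hC.exists_nat_bool_injection hne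
  have hcantor : ¬Countable (ℕ → Bool) := by
    rw [← Cardinal.mk_le_aleph0_iff, not_le]
    simpa using Cardinal.aleph0_lt_continuum
  exact hcantor (countable_univ_iff.1
    ((mapsTo_univ_iff.2 fun x => hfC (mem_range_self x)).countable_of_injOn hf.injOn hc))

theorem exists_iteratedDerivedSet_eq_empty {s : Set M} (hs : IsClosed s) (hc : s.Countable) :
    ∃ a, sᵈ[a] = ∅ := by
  obtain ⟨a, ha⟩ := iteratedDerivedSet_mem_fixedPoints s
  refine ⟨a, ?_⟩
  rw [← perfectKernel_eq_iteratedDerivedSet_of_mem_fixedPoints ha, ← not_nonempty_iff_eq_empty]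
  exact fun hne => (perfect_perfectKernel hs).not_countable hne (hc.mono (perfectKernel_subset s))

theorem exists_encard_iteratedDerivedSet_eq_add_one {s : Set M} (hs : IsCompact s)
    (hc : s.Countable) (hne : s.Nonempty) : ∃ (a : Ordinal.{u}) (n : ℕ), sᵈ[a].encard = n + 1 := by
  have hcpt : ∀ b, IsCompact sᵈ[b] := fun b =>
    hs.of_isClosed_subset (isClosed_iteratedDerivedSet hs.isClosed b)
      (iteratedDerivedSet_subset s b)
  obtain ⟨a₀, ha₀⟩ := exists_iteratedDerivedSet_eq_empty hs.isClosed hc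
  set ρ := sInf {a | sᵈ[a] = ∅}
  have hρ : sᵈ[ρ] = ∅ := csInf_mem (⟨a₀, ha₀⟩ : {a | sᵈ[a] = ∅}.Nonempty)
  have hlt : ∀ b < ρ, sᵈ[b].Nonempty := fun b hb =>
    nonempty_iff_ne_empty.2 (notMem_of_lt_csInf' (s := {a | sᵈ[a] = ∅}) hb)
  -- The first empty level `ρ` is a successor: at a limit, compactness would make the
  -- intersection of the earlier, nonempty levels nonempty.
  rcases Ordinal.zero_or_succ_or_isSuccLimit ρ with h0 | ⟨a, ha⟩ | hlim
  · rw [h0, iteratedDerivedSet_zero] at hρ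
    exact absurd hρ hne.ne_empty
  · have hfin : sᵈ[a].Finite := (hcpt a).finite_of_relDerivedSet_eq_empty <| by
      rwa [← iteratedDerivedSet_succ, ← Order.succ_eq_add_one, ha]
    obtain ⟨n, hn⟩ := hfin.exists_encard_eq_coe
    have hn0 : n ≠ 0 := by
      rintro rfl
      exact (hlt a (ha ▸ Order.lt_succ a)).ne_empty (encard_eq_zero.1 (by simpa using hn))
    exact ⟨a, n - 1, by rw [hn]; norm_cast; omega⟩
  · have : Nonempty (Iio ρ) := ⟨⟨0, hlim.bot_lt⟩⟩
    have := IsCompact.nonempty_iInter_of_directed_nonempty_isCompact_isClosed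
      (fun b : Iio ρ => sᵈ[b])
      ((iteratedDerivedSet_antitone s).comp_monotone (Subtype.mono_coe _)).directed_ge
      (fun b => hlt b b.2) (fun b => hcpt b) (fun b => isClosed_iteratedDerivedSet hs.isClosed b)
    rw [← iteratedDerivedSet_limit hlim, hρ] at this
    exact absurd this not_nonempty_empty

end Perfect

section Embedding

variable {X : Type u} [TopologicalSpace X]

def EmbedsInto (K L : Set X) : Prop :=
  ∃ f : X → X, ContinuousOn f K ∧ InjOn f K ∧ MapsTo f K L

theorem embedsInto_empty (L : Set X) : EmbedsInto ∅ L :=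
  ⟨id, continuousOn_empty _, injOn_empty _, mapsTo_empty _ _⟩

theorem EmbedsInto.mono_right {K L L' : Set X} (h : EmbedsInto K L) (hL : L ⊆ L') :
    EmbedsInto K L' :=
  let ⟨f, hfc, hfi, hfm⟩ := h
  ⟨f, hfc, hfi, hfm.mono_right hL⟩

theorem EmbedsInto.exists_homeomorph [T2Space X] {K L : Set X} (h : EmbedsInto K L)
    (hK : IsCompact K) : ∃ S ⊆ L, Nonempty (K ≃ₜ S) := by
  obtain ⟨f, hfc, hfi, hfm⟩ := h
  have : CompactSpace K := isCompact_iff_compactSpace.1 hK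
  exact ⟨f '' K, hfm.image_subset,
    ⟨Continuous.homeoOfEquivCompactToT2 (f := hfi.bijOn_image.equiv f)
      (hfc.mapsToRestrict hfi.bijOn_image.mapsTo)⟩⟩

theorem EmbedsInto.union {K L₁ L₂ U V : Set X} (h₁ : EmbedsInto (K ∩ U) L₁)
    (h₂ : EmbedsInto (K ∩ V) L₂) (hU : IsOpen U) (hV : IsOpen V) (hUV : Disjoint U V)
    (hK : K ⊆ U ∪ V) (hL : Disjoint L₁ L₂) : EmbedsInto K (L₁ ∪ L₂) := by
  classical
  obtain ⟨f₁, hf₁c, hf₁i, hf₁m⟩ := h₁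
  obtain ⟨f₂, hf₂c, hf₂i, hf₂m⟩ := h₂
  have hKUV : K = K ∩ U ∪ K ∩ V := by rw [← inter_union_distrib_left, inter_eq_left.2 hK]
  have hg₁ : EqOn (U.piecewise f₁ f₂) f₁ (K ∩ U) := fun x hx => piecewise_eq_of_mem _ _ _ hx.2
  have hg₂ : EqOn (U.piecewise f₁ f₂) f₂ (K ∩ V) := fun x hx =>
    piecewise_eq_of_notMem _ _ _ (hUV.notMem_of_mem_right hx.2)
  refine ⟨U.piecewise f₁ f₂, fun x hx => ?_, ?_, ?_⟩
  · rcases (hKUV ▸ hx : x ∈ K ∩ U ∪ K ∩ V) with hx | hx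
    · exact (continuousWithinAt_inter (hU.mem_nhds hx.2)).1 ((hf₁c.congr hg₁) x hx)
    · exact (continuousWithinAt_inter (hV.mem_nhds hx.2)).1 ((hf₂c.congr hg₂) x hx)
  · rw [hKUV, injOn_union (hUV.mono inter_subset_right inter_subset_right)]
    refine ⟨hg₁.injOn_iff.2 hf₁i, hg₂.injOn_iff.2 hf₂i, fun x hx y hy hxy => ?_⟩
    rw [hg₁ hx, hg₂ hy] at hxy
    exact hL.ne_of_mem (hf₁m hx) (hf₂m hy) hxy
  · rw [hKUV]
    exact (hg₁.mapsTo_iff.2 hf₁m).union_union (hg₂.mapsTo_iff.2 hf₂m)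

theorem embedsInto_of_subset_insert_iUnion {K L : Set X} {p q : X} (hq : q ∈ L) {U B : ℕ → Set X}
    (hU : ∀ n, IsOpen (U n)) (hUd : Pairwise (Disjoint on U)) (hKU : K ⊆ insert p (⋃ n, U n))
    (hUp : ∀ N, ∀ᶠ x in 𝓝 p, ∀ n < N, x ∉ U n) (hBL : ∀ n, B n ⊆ L)
    (hBd : Pairwise (Disjoint on B)) (hqB : ∀ n, q ∉ B n)
    (hBq : ∀ V ∈ 𝓝 q, ∀ᶠ n in atTop, B n ⊆ V) (h : ∀ n, EmbedsInto (K ∩ U n) (B n)) :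
    EmbedsInto K L := by
  classical
  choose f hfc hfi hfm using h
  have hpU : ∀ n, p ∉ U n := fun n => (hUp (n + 1)).self_of_nhds n n.lt_succ_self
  let g : X → X := fun x => if hx : ∃ n, x ∈ U n then f hx.choose x else q
  have hg : ∀ n, EqOn g (f n) (U n) := fun n x hx => by
    have hx' : ∃ n, x ∈ U n := ⟨n, hx⟩
    have : hx'.choose = n := hUd.eq (not_disjoint_iff.2 ⟨x, hx'.choose_spec, hx⟩)
    simp only [g, dif_pos hx', this]
  have hgp : g p = q := dif_neg (by simpa using hpU)
  have hgB : ∀ n, MapsTo g (K ∩ U n) (B n) := fun n x hx => hg n hx.2 ▸ hfm n hx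
  have hK : ∀ x ∈ K, x = p ∨ ∃ n, x ∈ K ∩ U n := fun x hx =>
    (hKU hx).imp id fun h => (mem_iUnion.1 h).imp fun n hn => ⟨hx, hn⟩
  refine ⟨g, fun x hx => ?_, fun x hx y hy hxy => ?_, fun x hx => ?_⟩
  · rcases hK x hx with rfl | ⟨n, hxn⟩
    · rw [ContinuousWithinAt, hgp, tendsto_def]
      intro V hV
      obtain ⟨N, hN⟩ := eventually_atTop.1 (hBq V hV)
      filter_upwards [mem_nhdsWithin_of_mem_nhds (hUp N), self_mem_nhdsWithin] with y hy hyK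
      rcases hK y hyK with rfl | ⟨n, hyn⟩
      · exact mem_preimage.2 (hgp ▸ mem_of_mem_nhds hV)
      · exact hN n (not_lt.1 fun h => hy n h hyn.2) (hgB n hyn)
    · exact (continuousWithinAt_inter ((hU n).mem_nhds hxn.2)).1
        (((hfc n).congr fun y hy => hg n hy.2) x hxn)
  · rcases hK x hx with rfl | ⟨m, hxm⟩ <;> rcases hK y hy with rfl | ⟨n, hyn⟩
    · rfl
    · exact absurd (by rw [← hgp, hxy]; exact hgB n hyn) (hqB n)
    · exact absurd (by rw [← hgp, ← hxy]; exact hgB m hxm) (hqB m)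
    · obtain rfl : m = n := hBd.eq (not_disjoint_iff.2 ⟨g x, hgB m hxm, hxy ▸ hgB n hyn⟩)
      exact hfi m hxm hyn (by rwa [← hg m hxm.2, ← hg m hyn.2])
  · rcases hK x hx with rfl | ⟨n, hxn⟩
    · exact hgp ▸ hq
    · exact hBL n (hgB n hxn)

end Embedding

theorem IsCompact.inter_preimage_of_disjoint_frontier {X Y : Type*} [TopologicalSpace X]
    [TopologicalSpace Y] {K : Set X} {f : X → Y} {U : Set Y} (hK : IsCompact K)
    (hf : Continuous f) (hU : IsOpen U) (h : Disjoint (f '' K) (frontier U)) :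
    IsCompact (K ∩ f ⁻¹' U) := by
  have : K ∩ f ⁻¹' closure U ⊆ K ∩ f ⁻¹' U := fun x ⟨hx, hxU⟩ => ⟨hx, by_contra fun hx' =>
    h.ne_of_mem (mem_image_of_mem f hx) ⟨hxU, by rwa [hU.interior_eq]⟩ rfl⟩
  rw [← this.antisymm (inter_subset_inter_right K (preimage_mono subset_closure))]
  exact hK.inter_right (isClosed_closure.preimage hf)

theorem exists_seq_strictAnti_tendsto_of_frequently {P : ℕ → ℝ → ℝ → Prop} {r₀ : ℝ}
    (h₀ : 0 < r₀) (h : ∀ n, ∀ ε > 0, ∃ᶠ δ in 𝓝[>] 0, P n ε δ) :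
    ∃ r : ℕ → ℝ, r 0 = r₀ ∧ StrictAnti r ∧ (∀ n, 0 < r n) ∧ Tendsto r atTop (𝓝 0) ∧
      ∀ n, P n (r n) (r (n + 1)) := by
  have step (n : ℕ) (ε : Ioi (0 : ℝ)) :
      ∃ δ : Ioi (0 : ℝ), δ.1 < min ε.1 (1 / (n + 1)) ∧ P n ε δ := by
    obtain ⟨δ, hP, hδ⟩ := ((h n ε ε.2).and_eventually
      (Ioo_mem_nhdsGT (lt_min ε.2 Nat.one_div_pos_of_nat))).exists
    exact ⟨⟨δ, hδ.1⟩, hδ.2, hP⟩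
  choose next hnext using step
  let r : ℕ → Ioi (0 : ℝ) := fun n => Nat.rec ⟨r₀, h₀⟩ next n
  refine ⟨fun n => (r n).1, rfl, strictAnti_nat_of_succ_lt fun n => ?_, fun n => (r n).2, ?_,
    fun n => (hnext n (r n)).2⟩
  · exact (hnext n (r n)).1.trans_le (min_le_left _ _)
  · refine (tendsto_add_atTop_iff_nat 1).1 (squeeze_zero (fun n => (r (n + 1)).2.le)
      (fun n => ?_) tendsto_one_div_add_atTop_nhds_zero_nat)
    exact ((hnext n (r n)).1.trans_le (min_le_right _ _)).le

section Metric

variable {M : Type u} [MetricSpace M]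

theorem exists_mem_Ioo_notMem_image_dist {K : Set M} (hK : K.Countable) (p : M) {a b : ℝ}
    (hab : a < b) : ∃ r ∈ Ioo a b, r ∉ (dist · p) '' K := by
  obtain ⟨r, hr, hrab⟩ := ((hK.image _).dense_compl ℝ).exists_between hab
  exact ⟨r, hrab, hr⟩

theorem frequently_notMem_image_dist {K : Set M} (hK : K.Countable) (p : M) :
    ∃ᶠ r in 𝓝[>] (0 : ℝ), r ∉ (dist · p) '' K :=
  (nhdsGT_basis 0).frequently_iff.2 fun _ hb => exists_mem_Ioo_notMem_image_dist hK p hb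

theorem exists_mem_Ioo_succ_of_tendsto {s : ℕ → ℝ} (hs : Tendsto s atTop (𝓝 0)) {x : ℝ}
    (hx₀ : 0 < x) (hx : x < s 0) (hxs : ∀ n, x ≠ s n) : ∃ n, x ∈ Ioo (s (n + 1)) (s n) := by
  obtain ⟨N, hN⟩ := (hs.eventually (gt_mem_nhds hx₀)).exists
  induction N with
  | zero => exact absurd hx hN.not_gt
  | succ m ih =>
    by_cases hm : s m < x
    · exact ih hm
    · exact ⟨m, hN, (not_lt.1 hm).lt_of_ne (hxs m)⟩

theorem embedsInto_of_forall_annulus {K L : Set M} {p q : M} (hK : Bornology.IsBounded K)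
    (hKc : K.Countable) (hq : q ∈ L)
    (h : ∀ a b, 0 < a → a < b → a ∉ (dist · p) '' K → b ∉ (dist · p) '' K → ∀ ε > 0,
      ∀ᶠ δ in 𝓝[>] 0, EmbedsInto (K ∩ (dist · p) ⁻¹' Ioo a b) (L ∩ (dist · q) ⁻¹' Ioo δ ε)) :
    EmbedsInto K L := by
  obtain ⟨R, hR, hKR⟩ := hK.subset_ball_lt 0 p
  obtain ⟨s, hs₀, hsa, hs, hslim, hsK⟩ := exists_seq_strictAnti_tendsto_of_frequently hR
    fun _ _ _ => frequently_notMem_image_dist hKc p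
  have hsK' : ∀ n, s n ∉ (dist · p) '' K := by
    rintro (_ | n)
    · rintro ⟨x, hx, hxR⟩
      exact (mem_ball.1 (hKR hx)).ne (hxR.trans hs₀)
    · exact hsK n
  obtain ⟨t, -, hta, ht, htlim, hst⟩ := exists_seq_strictAnti_tendsto_of_frequently one_pos
    fun n ε hε => (h _ _ (hs (n + 1)) (hsa n.lt_succ_self) (hsK' _) (hsK' n) ε hε).frequently
  have hds : Pairwise (Disjoint on fun n => Ioo (s (n + 1)) (s n)) := by
    simpa using hsa.antitone.pairwise_disjoint_on_Ioo_succ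
  have hdt : Pairwise (Disjoint on fun n => Ioo (t (n + 1)) (t n)) := by
    simpa using hta.antitone.pairwise_disjoint_on_Ioo_succ
  have hcover : K ⊆ insert p (⋃ n, (dist · p) ⁻¹' Ioo (s (n + 1)) (s n)) := fun x hx => by
    rcases eq_or_ne x p with rfl | hxp
    · exact mem_insert _ _
    · exact mem_insert_of_mem _ (mem_iUnion.2 (exists_mem_Ioo_succ_of_tendsto hslim
        (dist_pos.2 hxp) (hs₀ ▸ mem_ball.1 (hKR hx)) fun n hn => hsK' n ⟨x, hx, hn⟩))
  have hnear (N : ℕ) : ∀ᶠ x in 𝓝 p, ∀ n < N, x ∉ (dist · p) ⁻¹' Ioo (s (n + 1)) (s n) := by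
    filter_upwards [ball_mem_nhds p (hs N)] with x hx n hn hxn
    exact (hxn.1.trans (mem_ball.1 hx)).not_ge (hsa.antitone hn)
  have hshrink : ∀ V ∈ 𝓝 q, ∀ᶠ n in atTop, L ∩ (dist · q) ⁻¹' Ioo (t (n + 1)) (t n) ⊆ V := by
    intro V hV
    obtain ⟨ε, hε, hεV⟩ := Metric.mem_nhds_iff.1 hV
    filter_upwards [htlim.eventually (gt_mem_nhds hε)] with n hn x hx
    exact hεV (mem_ball.2 (hx.2.2.trans hn))
  exact embedsInto_of_subset_insert_iUnion hq
    (fun n => isOpen_Ioo.preimage (continuous_id.dist continuous_const))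
    (fun m n hmn => (hds hmn).preimage _) hcover hnear (fun n => inter_subset_left)
    (fun m n hmn => ((hdt hmn).preimage _).mono inter_subset_right inter_subset_right)
    (fun n hn => by simpa [(ht (n + 1)).not_gt] using hn.2) hshrink hst

end Metric

section Criterion

variable {M : Type u} [MetricSpace M]

theorem eventually_exists_isCompact_subset_annulus {L : Set M} (hL : IsCompact L)
    (hLc : L.Countable) {q : M} {γ : Ordinal.{u}} (hq : q ∈ Lᵈ[γ + 1]) (n : ℕ) {ε : ℝ}
    (hε : 0 < ε) : ∀ᶠ δ in 𝓝[>] 0, ∃ L' ⊆ L ∩ (dist · q) ⁻¹' Ioo δ ε, IsCompact L' ∧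
      (n : ℕ∞) + 1 ≤ L'ᵈ[γ].encard := by
  obtain ⟨ε', ⟨hε', hε'ε⟩, hε'L⟩ := exists_mem_Ioo_notMem_image_dist hLc q hε
  rw [iteratedDerivedSet_succ] at hq
  have hinf : ((ball q ε' ∩ Lᵈ[γ]) \ {q}).Infinite :=
    (Set.Infinite.of_accPt (hq.1.nhds_inter (ball_mem_nhds q hε'))).sdiff (finite_singleton q)
  obtain ⟨T, hT, hTn⟩ := exists_subset_encard_eq (hinf.encard_eq ▸ le_top : (n : ℕ∞) + 1 ≤ _)
  have hTfin : T.Finite := finite_of_encard_eq_coe (k := n + 1) (by rw [hTn]; norm_cast)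
  obtain ⟨η, hη, hηT⟩ := Metric.mem_nhds_iff.1
    (hTfin.isClosed.isOpen_compl.mem_nhds fun hqT => (hT hqT).2 rfl)
  filter_upwards [Ioo_mem_nhdsGT (lt_min hη hε')] with δ hδ
  obtain ⟨δ', ⟨hδδ', hδ'η⟩, hδ'L⟩ := exists_mem_Ioo_notMem_image_dist hLc q hδ.2
  have hd : Continuous (dist · q) := continuous_id.dist continuous_const
  refine ⟨L ∩ (dist · q) ⁻¹' Ioo δ' ε',
    inter_subset_inter_right L (preimage_mono (Ioo_subset_Ioo hδδ'.le hε'ε.le)),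
    hL.inter_preimage_of_disjoint_frontier hd isOpen_Ioo ?_, ?_⟩
  · rw [frontier_Ioo (hδ'η.trans_le (min_le_right _ _)), disjoint_insert_right,
      disjoint_singleton_right]
    exact ⟨hδ'L, hε'L⟩
  · rw [iteratedDerivedSet_inter_of_isOpen L (isOpen_Ioo.preimage hd), ← hTn]
    refine encard_le_encard fun x hx => ⟨(hT hx).1.2, ?_, (hT hx).1.1⟩
    exact (hδ'η.trans_le (min_le_left _ _)).trans_le (not_lt.1 fun h => hηT (mem_ball.2 h) hx)

theorem exists_isOpen_split {K S : Set M} (hK : IsCompact K) (hKc : K.Countable) (hS : S.Finite)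
    {p : M} (hp : p ∈ S) : ∃ U V : Set M, IsOpen U ∧ IsOpen V ∧ Disjoint U V ∧ K ⊆ U ∪ V ∧
      IsCompact (K ∩ U) ∧ IsCompact (K ∩ V) ∧ S ∩ U = {p} ∧ S ∩ V = S \ {p} := by
  obtain ⟨η, hη, hηS⟩ := Metric.mem_nhds_iff.1
    ((hS.sdiff (t := {p})).isClosed.isOpen_compl.mem_nhds fun h => h.2 rfl)
  obtain ⟨r, ⟨hr, hrη⟩, hrK⟩ := exists_mem_Ioo_notMem_image_dist hKc p hη
  have hd : Continuous (dist · p) := continuous_id.dist continuous_const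
  have hfar : ∀ x ∈ S, x ≠ p → r < dist x p := fun x hx hxp =>
    hrη.trans_le (not_lt.1 fun h => hηS (mem_ball.2 h) ⟨hx, hxp⟩)
  refine ⟨(dist · p) ⁻¹' Iio r, (dist · p) ⁻¹' Ioi r, isOpen_Iio.preimage hd,
    isOpen_Ioi.preimage hd, (Iio_disjoint_Ioi_same).preimage _, fun x hx => ?_,
    hK.inter_preimage_of_disjoint_frontier hd isOpen_Iio (by simpa [frontier_Iio] using hrK),
    hK.inter_preimage_of_disjoint_frontier hd isOpen_Ioi (by simpa [frontier_Ioi] using hrK),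
    ?_, ?_⟩
  · exact (lt_or_gt_of_ne fun h => hrK ⟨x, hx, h⟩).imp id id
  · ext x
    refine ⟨fun ⟨hx, hxr⟩ => by_contra fun hxp => (hfar x hx hxp).not_gt hxr, ?_⟩
    rintro rfl
    exact ⟨hp, by simpa using hr⟩
  · ext x
    refine ⟨fun ⟨hx, hxr⟩ => ⟨hx, fun hxp => ?_⟩, fun ⟨hx, hxp⟩ => ⟨hx, hfar x hx hxp⟩⟩
    rw [mem_singleton_iff.1 hxp] at hxr
    simp [hr.not_gt] at hxr

variable (M) in
def EmbeddingCriterion (β : Ordinal.{u}) (n : ℕ) : Prop :=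
  ∀ ⦃K L : Set M⦄, IsCompact K → K.Countable → IsCompact L → L.Countable →
    Kᵈ[β].encard = n + 1 → n + 1 ≤ Lᵈ[β].encard → EmbedsInto K L

theorem embeddingCriterion_zero [CompleteSpace M] {β : Ordinal.{u}}
    (ih : ∀ γ < β, ∀ n, EmbeddingCriterion M γ n) : EmbeddingCriterion M β 0 := by
  intro K L hK hKc hL hLc hK₁ hL₁
  obtain ⟨p, hp⟩ := encard_eq_one.1 (by simpa using hK₁)
  obtain ⟨q, hq⟩ := one_le_encard_iff_nonempty.1 (by simpa using hL₁)
  have hd : Continuous (dist · p) := continuous_id.dist continuous_const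
  refine embedsInto_of_forall_annulus (p := p) hK.isBounded hKc (iteratedDerivedSet_subset L β hq)
    fun a b ha hab hKa hKb ε hε => ?_
  set A := K ∩ (dist · p) ⁻¹' Ioo a b
  rcases A.eq_empty_or_nonempty with hA | hA
  · exact Eventually.of_forall fun _ => hA ▸ embedsInto_empty _
  have hAc : IsCompact A := hK.inter_preimage_of_disjoint_frontier hd isOpen_Ioo <| by
    rw [frontier_Ioo hab, disjoint_insert_right, disjoint_singleton_right]
    exact ⟨hKa, hKb⟩
  have hAβ : Aᵈ[β] = ∅ := by
    rw [iteratedDerivedSet_inter_of_isOpen K (isOpen_Ioo.preimage hd), hp]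
    simp [ha.not_gt]
  obtain ⟨γ, k, hk⟩ :=
    exists_encard_iteratedDerivedSet_eq_add_one hAc (hKc.mono inter_subset_left) hA
  have hγ : γ < β := lt_of_not_ge fun h => by
    simpa [subset_empty_iff.1 (hAβ ▸ iteratedDerivedSet_antitone A h)] using hk.symm
  have hqγ : q ∈ Lᵈ[γ + 1] := iteratedDerivedSet_antitone L (Order.add_one_le_of_lt hγ) hq
  filter_upwards [eventually_exists_isCompact_subset_annulus hL hLc hqγ k hε]
    with δ ⟨L', hL'sub, hL'c, hL'k⟩
  exact (ih γ hγ k hAc (hKc.mono inter_subset_left) hL'c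
    (hLc.mono (hL'sub.trans inter_subset_left)) hk hL'k).mono_right hL'sub

theorem encard_sdiff_singleton_of_encard_eq {X : Type*} {s : Set X} {a : X} {n : ℕ}
    (hs : s.encard = (n + 1 : ℕ) + 1) (ha : a ∈ s) : (s \ {a}).encard = n + 1 := by
  have h := encard_sdiff_singleton_add_one ha
  rw [hs] at h
  simpa using h

theorem EmbeddingCriterion.succ {β : Ordinal.{u}} {n : ℕ} (h₀ : EmbeddingCriterion M β 0)
    (hn : EmbeddingCriterion M β n) : EmbeddingCriterion M β (n + 1) := by
  intro K L hK hKc hL hLc hKn hLn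
  have hfin : Kᵈ[β].Finite := finite_of_encard_eq_coe (k := n + 2) (by rw [hKn]; norm_cast)
  obtain ⟨p, hp⟩ : Kᵈ[β].Nonempty := nonempty_of_encard_ne_zero (by simp [hKn])
  obtain ⟨T, hTL, hTn⟩ := exists_subset_encard_eq hLn
  have hTfin : T.Finite := finite_of_encard_eq_coe (k := n + 2) (by rw [hTn]; norm_cast)
  obtain ⟨x, hx⟩ : T.Nonempty := nonempty_of_encard_ne_zero (by simp [hTn])
  obtain ⟨U, V, hU, hV, hUV, hKUV, hKU, hKV, hpU, hpV⟩ := exists_isOpen_split hK hKc hfin hp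
  obtain ⟨U', V', hU', hV', hUV', -, hLU', hLV', hxU', hxV'⟩ :=
    exists_isOpen_split hL hLc hTfin hx
  have hK₁ : (K ∩ U)ᵈ[β].encard = (0 : ℕ) + 1 := by
    rw [iteratedDerivedSet_inter_of_isOpen K hU, hpU]; simp
  have hL₁ : (0 : ℕ) + 1 ≤ (L ∩ U')ᵈ[β].encard := by
    rw [iteratedDerivedSet_inter_of_isOpen L hU']
    simpa using ⟨x, hTL (hxU'.symm.subset rfl).1, (hxU'.symm.subset rfl).2⟩
  have hK₂ : (K ∩ V)ᵈ[β].encard = n + 1 := by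
    rw [iteratedDerivedSet_inter_of_isOpen K hV, hpV]
    exact encard_sdiff_singleton_of_encard_eq hKn hp
  have hL₂ : n + 1 ≤ (L ∩ V')ᵈ[β].encard := by
    rw [iteratedDerivedSet_inter_of_isOpen L hV', ← encard_sdiff_singleton_of_encard_eq hTn hx,
      ← hxV']
    exact encard_le_encard (inter_subset_inter_left V' hTL)
  exact (EmbedsInto.union
    (h₀ hKU (hKc.mono inter_subset_left) hLU' (hLc.mono inter_subset_left) hK₁ hL₁)
    (hn hKV (hKc.mono inter_subset_left) hLV' (hLc.mono inter_subset_left) hK₂ hL₂)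
    hU hV hUV hKUV (hUV'.mono inter_subset_right inter_subset_right)).mono_right
    (union_subset inter_subset_left inter_subset_left)

end Criterion

theorem embeddingCriterion {M : Type u} [MetricSpace M] [CompleteSpace M] (β : Ordinal.{u})
    (n : ℕ) : EmbeddingCriterion M β n := by
  induction β using WellFoundedLT.induction generalizing n with
  | _ β ih =>
    have h₀ := embeddingCriterion_zero ih
    induction n with
    | zero => exact h₀
    | succ n ihn => exact h₀.succ ihn

/-- If `X` and `Y` are countable compact subsets of a complete metric space, then
`X` is homeomorphic to a subset of `Y` or vice versa. -/
theorem countable_compact_subsets_comparable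
    (M : Type*) [MetricSpace M] [CompleteSpace M]
    (X Y : Set M) (hXc : X.Countable) (hYc : Y.Countable)
    (hX : IsCompact X) (hY : IsCompact Y) :
    (∃ S : Set M, S ⊆ Y ∧ Nonempty (X ≃ₜ S)) ∨
    (∃ S : Set M, S ⊆ X ∧ Nonempty (Y ≃ₜ S)) := by
  rcases X.eq_empty_or_nonempty with rfl | hX₀
  · exact Or.inl ((embedsInto_empty Y).exists_homeomorph hX)
  rcases Y.eq_empty_or_nonempty with rfl | hY₀
  · exact Or.inr ((embedsInto_empty X).exists_homeomorph hY)
  obtain ⟨a, m, ha⟩ := exists_encard_iteratedDerivedSet_eq_add_one hX hXc hX₀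
  obtain ⟨b, n, hb⟩ := exists_encard_iteratedDerivedSet_eq_add_one hY hYc hY₀
  have hne {Z : Set M} {c : Ordinal} {k : ℕ} (h : Zᵈ[c].encard = k + 1) : Zᵈ[c].Nonempty :=
    nonempty_of_encard_ne_zero (by simp [h])
  rcases lt_trichotomy a b with hab | rfl | hba
  · refine Or.inl ((embeddingCriterion a m hX hXc hY hYc ha ?_).exists_homeomorph hX)
    rw [(infinite_iteratedDerivedSet_of_lt hab (hne hb)).encard_eq]
    exact le_top
  · rcases le_total m n with hmn | hnm
    · exact Or.inl
        ((embeddingCriterion a m hX hXc hY hYc ha (hb ▸ by gcongr)).exists_homeomorph hX)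
    · exact Or.inr
        ((embeddingCriterion a n hY hYc hX hXc hb (ha ▸ by gcongr)).exists_homeomorph hY)
  · refine Or.inr ((embeddingCriterion b n hY hYc hX hXc hb ?_).exists_homeomorph hY)
    rw [(infinite_iteratedDerivedSet_of_lt hba (hne ha)).encard_eq]
    exact le_top
end

section
/- Every infinite topological space contains a subspace homeomorphic to ℕ equipped with exactly one of the following five topologies: the discrete topology, the indiscrete topology, the cofinite topology, the initial-segment topology (opens are ∅, ℕ, and the sets {k : k ≤ n}), or the final-segment topology (opens are ∅, ℕ, and the sets {k : k ≥ n}). -/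
/-!
Enumerate infinitely many points as `x : ℕ → X` and pass to subsequences with the infinite
Ramsey theorem for transitive relations (`exists_increasing_or_nonincreasing_subseq`), applied to
inseparability and to specialization in both directions. Pairwise inseparable points form an
indiscrete subspace. If no two points are inseparable and `x m ⤳ x n` (resp. `x n ⤳ x m`)
whenever `m < n`, the open sets pulled back to `ℕ` are exactly the lower (resp. upper) sets. In
the remaining case the subspace is T₁, and an infinite T₁ space either has a minimal infinite
closed set `C`, which every closed set meets in a finite set or in all of `C` (so `C` carries the
cofinite topology), or a strictly decreasing sequence of closed sets `C n`, and then points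
`x n ∈ C n \ C (n + 1)` are isolated from each other. The five topologies are told apart by T₀,
T₁ and the existence of an isolated point.
-/

open TopologicalSpace in
/-- The five Ginsburg–Sands topologies on ℕ: discrete, indiscrete, cofinite,
initial-segment, and final-segment. -/
noncomputable def gsTop : Fin 5 → TopologicalSpace ℕ
  | 0 => ⊥  -- discrete
  | 1 => ⊤  -- indiscrete
  | 2 => TopologicalSpace.generateFrom {s : Set ℕ | sᶜ.Finite}  -- cofinite
  | 3 => TopologicalSpace.generateFrom {s : Set ℕ | ∃ n, s = {k | k ≤ n}}  -- initial segments
  | 4 => TopologicalSpace.generateFrom {s : Set ℕ | ∃ n, s = {k | n ≤ k}}  -- final segments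

open Set Function Topology TopologicalSpace

lemma gsTop_two_eq_cofinite : gsTop 2 = .cofinite := by
  let _ : TopologicalSpace ℕ := .cofinite
  refine (isTopologicalBasis_of_isOpen_of_nhds (s := {s : Set ℕ | sᶜ.Finite})
    (fun u hu _ => hu) ?_).eq_generateFrom.symm
  exact fun a u ha hu => ⟨u, hu ⟨a, ha⟩, ha, subset_rfl⟩

lemma gsTop_three_eq_lowerSet : gsTop 3 = lowerSet ℕ := by
  let _ := lowerSet ℕ
  refine (isTopologicalBasis_of_isOpen_of_nhds ?_ ?_).eq_generateFrom.symm
  · rintro _ ⟨n, rfl⟩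
    exact isLowerSet_Iic n
  · exact fun a u ha hu => ⟨Iic a, ⟨a, rfl⟩, self_mem_Iic, fun k hk => hu hk ha⟩

lemma gsTop_four_eq_upperSet : gsTop 4 = upperSet ℕ := by
  let _ := upperSet ℕ
  refine (isTopologicalBasis_of_isOpen_of_nhds ?_ ?_).eq_generateFrom.symm
  · rintro _ ⟨n, rfl⟩
    exact isUpperSet_Ici n
  · exact fun a u ha hu => ⟨Ici a, ⟨a, rfl⟩, self_mem_Ici, fun k hk => hu hk ha⟩

section SpecializationOrder

variable {t : TopologicalSpace ℕ} [T0Space ℕ]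

lemma eq_lowerSet_of_specializes (h : ∀ m n : ℕ, m ≤ n → m ⤳ n) : t = lowerSet ℕ := by
  have isLowerSet_of_isOpen {s : Set ℕ} (hs : IsOpen s) : IsLowerSet s :=
    fun _ _ hle hb => (h _ _ hle).mem_open hs hb
  have isOpen_Iic (n : ℕ) : IsOpen (Iic n) := by
    obtain ⟨U, hU, hnU, hnU'⟩ : ∃ U, IsOpen U ∧ n ∈ U ∧ n + 1 ∉ U := by
      have : ¬ (n + 1) ⤳ n := fun h' => n.succ_ne_self (h'.antisymm (h _ _ n.le_succ)).eq
      simpa [specializes_iff_forall_open] using this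
    convert hU using 1
    ext k
    exact ⟨fun hk => isLowerSet_of_isOpen hU hk hnU,
      fun hk => not_lt.1 fun hlt => hnU' (isLowerSet_of_isOpen hU (Nat.succ_le_of_lt hlt) hk)⟩
  refine TopologicalSpace.ext_iff.2 fun s => ⟨isLowerSet_of_isOpen, fun hs => ?_⟩
  exact isOpen_iff_forall_mem_open.2 fun n hn =>
    ⟨Iic n, fun k hk => hs hk hn, isOpen_Iic n, self_mem_Iic⟩

lemma eq_upperSet_of_specializes (h : ∀ m n : ℕ, m ≤ n → n ⤳ m) : t = upperSet ℕ := by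
  have isUpperSet_of_isOpen {s : Set ℕ} (hs : IsOpen s) : IsUpperSet s :=
    fun _ _ hle hb => (h _ _ hle).mem_open hs hb
  have isOpen_Ici (n : ℕ) : IsOpen (Ici n) := by
    cases n with
    | zero => simp
    | succ n =>
      obtain ⟨U, hU, hnU, hnU'⟩ : ∃ U, IsOpen U ∧ n + 1 ∈ U ∧ n ∉ U := by
        have : ¬ n ⤳ (n + 1) := fun h' => n.succ_ne_self (h'.antisymm (h _ _ n.le_succ)).eq.symm
        simpa [specializes_iff_forall_open] using this
      convert hU using 1
      ext k
      exact ⟨fun hk => isUpperSet_of_isOpen hU hk hnU,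
        fun hk => not_lt.1 fun hlt => hnU' (isUpperSet_of_isOpen hU (Nat.le_of_lt_succ hlt) hk)⟩
  refine TopologicalSpace.ext_iff.2 fun s => ⟨isUpperSet_of_isOpen, fun hs => ?_⟩
  exact isOpen_iff_forall_mem_open.2 fun n hn =>
    ⟨Ici n, fun k hk => hs hk hn, isOpen_Ici n, self_mem_Ici⟩

end SpecializationOrder

section T1

variable {α : Type*} [TopologicalSpace α] [T1Space α]

lemma induced_eq_cofinite_of_minimal {C : Set α}
    (hC : Minimal (fun C => IsClosed C ∧ C.Infinite) C) {x : ℕ → α} (hx : Injective x)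
    (hxC : ∀ n, x n ∈ C) : induced x ‹_› = .cofinite := by
  refine TopologicalSpace.ext_iff.2 fun s => ⟨?_, fun hs => ?_⟩
  · rintro ⟨U, hU, rfl⟩ ⟨n, hn⟩
    have hfin : (Uᶜ ∩ C).Finite := by
      by_contra hinf
      have hCU : C ⊆ Uᶜ ∩ C := hC.2 ⟨hU.isClosed_compl.inter hC.1.1, hinf⟩ inter_subset_right
      exact (hCU (hxC n)).1 hn
    exact (hfin.preimage hx.injOn).subset fun k hk => ⟨hk, hxC k⟩
  · rcases s.eq_empty_or_nonempty with rfl | hne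
    · exact isOpen_induced_iff.2 ⟨∅, isOpen_empty, rfl⟩
    refine isOpen_induced_iff.2 ⟨(x '' sᶜ)ᶜ, ((hs hne).image x).isClosed.isOpen_compl, ?_⟩
    ext n
    simp [hx.mem_set_image]

lemma injective_and_induced_eq_bot_of_antitone {C : ℕ → Set α} (hC : ∀ n, IsClosed (C n))
    (hanti : Antitone C) {x : ℕ → α} (hxC : ∀ n, x n ∈ C n) (hxC' : ∀ n, x n ∉ C (n + 1)) :
    Injective x ∧ induced x ‹_› = ⊥ := by
  have mem_of_lt {m n : ℕ} (h : m < n) : x n ∈ C (m + 1) := hanti h (hxC n)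
  have hx : Injective x := by
    intro m n heq
    by_contra hne
    rcases Nat.lt_or_gt_of_ne hne with h | h
    · exact hxC' m (heq ▸ mem_of_lt h)
    · exact hxC' n (heq ▸ mem_of_lt h)
  refine ⟨hx, ?_⟩
  let _ := induced x ‹_›
  have : DiscreteTopology ℕ := discreteTopology_iff_isOpen_singleton.2 fun n => by
    refine isOpen_induced_iff.2 ⟨(C (n + 1))ᶜ \ x '' Iio n,
      (hC _).isOpen_compl.sdiff ((finite_Iio n).image x).isClosed, ?_⟩
    ext k
    simp only [mem_preimage, mem_sdiff, mem_compl_iff, hx.mem_set_image, mem_Iio, not_lt,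
      mem_singleton_iff]
    refine ⟨fun ⟨h, hnk⟩ => hnk.antisymm' (not_lt.1 fun hlt => h (mem_of_lt hlt)), ?_⟩
    rintro rfl
    exact ⟨hxC' k, le_rfl⟩
  exact DiscreteTopology.eq_bot

theorem exists_injective_induced_eq_bot_or_cofinite [Infinite α] :
    ∃ x : ℕ → α, Injective x ∧ (induced x ‹_› = ⊥ ∨ induced x ‹_› = .cofinite) := by
  set F := {C : Set α | IsClosed C ∧ C.Infinite}
  by_cases hwf : F.WellFoundedOn (· < ·)
  · obtain ⟨C, hC⟩ := hwf.exists_minimal ⟨univ, isClosed_univ, infinite_univ⟩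
    let e := hC.1.2.natEmbedding
    have he : Injective (Subtype.val ∘ e) := Subtype.val_injective.comp e.injective
    exact ⟨_, he, .inr (induced_eq_cofinite_of_minimal hC he fun n => (e n).2)⟩
  · obtain ⟨C, hCF⟩ : ∃ C : (· > ·) ↪r (· < ·), ∀ n, C n ∈ F := by
      simpa [wellFoundedOn_iff_no_descending_seq] using hwf
    have hanti : StrictAnti C := fun _ _ h => C.map_rel_iff.2 h
    choose x hxC hxC' using fun n => exists_of_ssubset (hanti (Nat.lt_succ_self n))
    obtain ⟨hx, hbot⟩ :=
      injective_and_induced_eq_bot_of_antitone (fun n => (hCF n).1) hanti.antitone hxC hxC'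
    exact ⟨x, hx, .inl hbot⟩

end T1

section Subsequences

variable {X : Type*} [TopologicalSpace X]

lemma induced_eq_top_of_inseparable {x : ℕ → X} (h : ∀ m n, m < n → Inseparable (x m) (x n)) :
    induced x ‹_› = ⊤ := by
  let _ := induced x ‹_›
  have : IndiscreteTopology ℕ := .of_forall_inseparable fun m n => by
    refine (IsInducing.induced x).inseparable_iff.1 ?_
    rcases lt_trichotomy m n with hmn | rfl | hmn
    exacts [h m n hmn, .rfl, (h n m hmn).symm]
  exact IndiscreteTopology.eq_top ℕ

lemma t0Space_induced_of_not_inseparable {x : ℕ → X}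
    (h : ∀ m n, m < n → ¬ Inseparable (x m) (x n)) : @T0Space ℕ (induced x ‹_›) := by
  let _ := induced x ‹_›
  refine (t0Space_iff_inseparable ℕ).2 fun m n hmn => ?_
  have hx := (IsInducing.induced x).inseparable_iff.2 hmn
  by_contra hne
  rcases Nat.lt_or_gt_of_ne hne with hlt | hlt
  exacts [h m n hlt hx, h n m hlt hx.symm]

lemma t1Space_induced_of_not_specializes {x : ℕ → X}
    (h : ∀ m n, m < n → ¬ x m ⤳ x n ∧ ¬ x n ⤳ x m) : @T1Space ℕ (induced x ‹_›) := by
  let _ := induced x ‹_›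
  refine t1Space_iff_specializes_imp_eq.2 fun m n hmn => ?_
  have hx := (IsInducing.induced x).specializes_iff.2 hmn
  by_contra hne
  rcases Nat.lt_or_gt_of_ne hne with hlt | hlt
  exacts [(h m n hlt).1 hx, (h n m hlt).2 hx]

lemma induced_eq_lowerSet_of_specializes {x : ℕ → X}
    (hins : ∀ m n, m < n → ¬ Inseparable (x m) (x n)) (hsp : ∀ m n, m < n → x m ⤳ x n) :
    induced x ‹_› = lowerSet ℕ := by
  let _ := induced x ‹_›
  have := t0Space_induced_of_not_inseparable hins
  refine eq_lowerSet_of_specializes fun m n hmn => ?_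
  rcases hmn.eq_or_lt with rfl | hlt
  exacts [specializes_rfl, (IsInducing.induced x).specializes_iff.1 (hsp m n hlt)]

lemma induced_eq_upperSet_of_specializes {x : ℕ → X}
    (hins : ∀ m n, m < n → ¬ Inseparable (x m) (x n)) (hsp : ∀ m n, m < n → x n ⤳ x m) :
    induced x ‹_› = upperSet ℕ := by
  let _ := induced x ‹_›
  have := t0Space_induced_of_not_inseparable hins
  refine eq_upperSet_of_specializes fun m n hmn => ?_
  rcases hmn.eq_or_lt with rfl | hlt
  exacts [specializes_rfl, (IsInducing.induced x).specializes_iff.1 (hsp m n hlt)]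

lemma exists_induced_eq_gsTop_of_not_inseparable {x : ℕ → X}
    (hins : ∀ m n, m < n → ¬ Inseparable (x m) (x n)) :
    ∃ σ : ℕ → ℕ, Injective σ ∧ ∃ i, induced (x ∘ σ) ‹_› = gsTop i := by
  have hins' {σ : ℕ → ℕ} (hσ : StrictMono σ) (m n : ℕ) (h : m < n) :
      ¬ Inseparable (x (σ m)) (x (σ n)) :=
    hins _ _ (hσ h)
  have : IsTrans X (· ⤳ ·) := ⟨fun _ _ _ => Specializes.trans⟩
  obtain ⟨g, hup | hnup⟩ := exists_increasing_or_nonincreasing_subseq (· ⤳ ·) x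
  · exact ⟨g, g.injective, 3, (induced_eq_lowerSet_of_specializes (hins' g.strictMono) hup).trans
      gsTop_three_eq_lowerSet.symm⟩
  have : IsTrans X (fun a b => b ⤳ a) := ⟨fun _ _ _ h₁ h₂ => h₂.trans h₁⟩
  obtain ⟨g', hdown | hndown⟩ :=
    exists_increasing_or_nonincreasing_subseq (fun a b => b ⤳ a) (x ∘ g)
  · exact ⟨g ∘ g', g.injective.comp g'.injective, 4,
      (induced_eq_upperSet_of_specializes (hins' (g.strictMono.comp g'.strictMono)) hdown).trans
        gsTop_four_eq_upperSet.symm⟩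
  let _ := induced (x ∘ g ∘ g') ‹_›
  have := t1Space_induced_of_not_specializes (x := x ∘ g ∘ g') fun m n h =>
    ⟨hnup _ _ (g'.strictMono h), hndown m n h⟩
  obtain ⟨σ, hσ, hσt⟩ := exists_injective_induced_eq_bot_or_cofinite (α := ℕ)
  have hcomp := (induced_compose (tγ := ‹TopologicalSpace X›) (f := σ) (g := x ∘ g ∘ g')).symm
  refine ⟨g ∘ g' ∘ σ, g.injective.comp (g'.injective.comp hσ), ?_⟩
  rcases hσt with hbot | hcof
  · exact ⟨0, hcomp.trans hbot⟩
  · exact ⟨2, hcomp.trans (hcof.trans gsTop_two_eq_cofinite.symm)⟩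

theorem exists_injective_induced_eq_gsTop [Infinite X] :
    ∃ x : ℕ → X, Injective x ∧ ∃ i, induced x ‹_› = gsTop i := by
  have : IsTrans X Inseparable := ⟨fun _ _ _ => Inseparable.trans⟩
  let x := Infinite.natEmbedding X
  obtain ⟨g, hins | hnins⟩ := exists_increasing_or_nonincreasing_subseq Inseparable x
  · exact ⟨x ∘ g, x.injective.comp g.injective, 1, induced_eq_top_of_inseparable hins⟩
  · obtain ⟨σ, hσ, i, hi⟩ := exists_induced_eq_gsTop_of_not_inseparable hnins
    exact ⟨x ∘ g ∘ σ, x.injective.comp (g.injective.comp hσ), i, hi⟩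

lemma nonempty_homeomorph_range {x : ℕ → X} (hx : Injective x) {t : TopologicalSpace ℕ}
    (h : induced x ‹_› = t) : Nonempty (@Homeomorph (range x) ℕ _ t) := by
  subst h
  let _ := induced x ‹_›
  exact ⟨(IsEmbedding.toHomeomorph ⟨.induced x, hx⟩).symm⟩

end Subsequences

section Invariants

lemma t1Space_cofinite {α : Type*} : @T1Space α .cofinite :=
  let _ : TopologicalSpace α := .cofinite
  ⟨fun x => isOpen_compl_iff.1 fun _ => by simp⟩

lemma t0Space_lowerSet {α : Type*} [PartialOrder α] : @T0Space α (lowerSet α) := by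
  let _ := lowerSet α
  refine (t0Space_iff_inseparable α).2 fun a b h => ?_
  exact (IsLowerSet.specializes_iff_le.1 h.specializes).antisymm
    (IsLowerSet.specializes_iff_le.1 h.specializes')

lemma t0Space_upperSet {α : Type*} [PartialOrder α] : @T0Space α (upperSet α) := by
  let _ := upperSet α
  refine (t0Space_iff_inseparable α).2 fun a b h => ?_
  exact (IsUpperSet.specializes_iff_le.1 h.specializes').antisymm
    (IsUpperSet.specializes_iff_le.1 h.specializes)

lemma not_t1Space_lowerSet {α : Type*} [PartialOrder α] {a b : α} (hab : a < b) :
    ¬ @T1Space α (lowerSet α) := by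
  let _ := lowerSet α
  exact fun _ => hab.ne (specializes_iff_eq.1 (IsLowerSet.specializes_iff_le.2 hab.le))

lemma not_t1Space_upperSet {α : Type*} [PartialOrder α] {a b : α} (hab : a < b) :
    ¬ @T1Space α (upperSet α) := by
  let _ := upperSet α
  exact fun _ => hab.ne' (specializes_iff_eq.1 (IsUpperSet.specializes_iff_le.2 hab.le))

lemma t0Space_gsTop_iff (i : Fin 5) : @T0Space ℕ (gsTop i) ↔ i ≠ 1 := by
  match i with
  | 0 => exact iff_of_true (inferInstanceAs (@T0Space ℕ ⊥)) (by decide)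
  | 1 =>
    let _ : TopologicalSpace ℕ := ⊤
    have : IndiscreteTopology ℕ := ⟨rfl⟩
    exact iff_of_false (fun h => zero_ne_one (@Inseparable.eq ℕ ⊤ h 0 1 (.all 0 1))) (by decide)
  | 2 =>
    exact iff_of_true (gsTop_two_eq_cofinite ▸ @T1Space.t0Space _ .cofinite t1Space_cofinite)
      (by decide)
  | 3 => exact iff_of_true (gsTop_three_eq_lowerSet ▸ t0Space_lowerSet) (by decide)
  | 4 => exact iff_of_true (gsTop_four_eq_upperSet ▸ t0Space_upperSet) (by decide)

lemma t1Space_gsTop_iff (i : Fin 5) : @T1Space ℕ (gsTop i) ↔ i = 0 ∨ i = 2 := by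
  match i with
  | 0 => exact iff_of_true (inferInstanceAs (@T1Space ℕ ⊥)) (by decide)
  | 1 =>
    exact iff_of_false (fun h => (t0Space_gsTop_iff 1).1 (@T1Space.t0Space _ (gsTop 1) h) rfl)
      (by decide)
  | 2 => exact iff_of_true (gsTop_two_eq_cofinite ▸ t1Space_cofinite) (by decide)
  | 3 => exact iff_of_false (gsTop_three_eq_lowerSet ▸ not_t1Space_lowerSet zero_lt_one) (by decide)
  | 4 => exact iff_of_false (gsTop_four_eq_upperSet ▸ not_t1Space_upperSet zero_lt_one) (by decide)

lemma exists_isOpen_singleton_gsTop_iff (i : Fin 5) :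
    (∃ n, IsOpen[gsTop i] {n}) ↔ i = 0 ∨ i = 3 := by
  match i with
  | 0 => exact iff_of_true ⟨0, @isOpen_discrete ℕ ⊥ _ {0}⟩ (by decide)
  | 1 =>
    refine iff_of_false (fun ⟨n, hn⟩ => ?_) (by decide)
    rcases (isOpen_top_iff _).1 hn with h | h
    · exact singleton_ne_empty n h
    · exact Nat.succ_ne_self n (mem_singleton_iff.1 (h ▸ mem_univ (n + 1)))
  | 2 =>
    refine iff_of_false (fun ⟨n, hn⟩ => ?_) (by decide)
    rw [gsTop_two_eq_cofinite] at hn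
    exact (finite_singleton n).infinite_compl (hn (singleton_nonempty n))
  | 3 =>
    refine iff_of_true ⟨0, ?_⟩ (by decide)
    rw [gsTop_three_eq_lowerSet]
    exact fun a b hab hb => Nat.le_zero.1 (hb ▸ hab)
  | 4 =>
    refine iff_of_false (fun ⟨n, hn⟩ => ?_) (by decide)
    rw [gsTop_four_eq_upperSet] at hn
    exact Nat.succ_ne_self n (hn n.le_succ rfl)

variable {Y : Type*} [TopologicalSpace Y] {i : Fin 5}

lemma t0Space_iff_of_homeomorph_gsTop (e : @Homeomorph Y ℕ _ (gsTop i)) :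
    T0Space Y ↔ i ≠ 1 := by
  let _ := gsTop i
  rw [← t0Space_gsTop_iff]
  exact ⟨fun _ => e.t0Space, fun _ => e.symm.t0Space⟩

lemma t1Space_iff_of_homeomorph_gsTop (e : @Homeomorph Y ℕ _ (gsTop i)) :
    T1Space Y ↔ i = 0 ∨ i = 2 := by
  let _ := gsTop i
  rw [← t1Space_gsTop_iff]
  exact ⟨fun _ => e.t1Space, fun _ => e.symm.t1Space⟩

lemma exists_isOpen_singleton_iff_of_homeomorph_gsTop (e : @Homeomorph Y ℕ _ (gsTop i)) :
    (∃ y : Y, IsOpen {y}) ↔ i = 0 ∨ i = 3 := by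
  let _ := gsTop i
  rw [← exists_isOpen_singleton_gsTop_iff]
  refine ⟨fun ⟨y, hy⟩ => ⟨e y, ?_⟩, fun ⟨n, hn⟩ => ⟨e.symm n, ?_⟩⟩
  · simpa using e.isOpen_image.2 hy
  · simpa using e.symm.isOpen_image.2 hn

lemma eq_of_homeomorph_gsTop {j : Fin 5} (e : @Homeomorph Y ℕ _ (gsTop i))
    (e' : @Homeomorph Y ℕ _ (gsTop j)) : i = j := by
  have h0 := (t0Space_iff_of_homeomorph_gsTop e).symm.trans (t0Space_iff_of_homeomorph_gsTop e')
  have h1 := (t1Space_iff_of_homeomorph_gsTop e).symm.trans (t1Space_iff_of_homeomorph_gsTop e')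
  have h2 := (exists_isOpen_singleton_iff_of_homeomorph_gsTop e).symm.trans
    (exists_isOpen_singleton_iff_of_homeomorph_gsTop e')
  revert h0 h1 h2
  fin_cases i <;> fin_cases j <;> decide

end Invariants

/-- Ginsburg–Sands theorem: every infinite topological space has a subspace
homeomorphic to exactly one of the five topologies on ℕ: discrete, indiscrete,
cofinite, initial-segment, final-segment. -/
theorem ginsburg_sands
    (X : Type*) [TopologicalSpace X] [Infinite X] :
    ∃ S : Set X, ∃! i : Fin 5, Nonempty (@Homeomorph S ℕ _ (gsTop i)) := by
  obtain ⟨x, hx, i, hi⟩ := exists_injective_induced_eq_gsTop (X := X)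
  obtain ⟨e⟩ := nonempty_homeomorph_range hx hi
  exact ⟨range x, i, ⟨e⟩, fun j ⟨e'⟩ => eq_of_homeomorph_gsTop e' e⟩
end
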